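/- Let G be a graph, let 𝒯 = (T, {X_t}) be a tree decomposition of G, and let W be a nonempty subset of V(G). Then W can be covered by at most 2·α(W) − 1 bags of 𝒯, i.e., there is a set ℬ of at most 2·α(W) − 1 nodes of T such that every vertex of W lies in X_t for some t ∈ ℬ. -/

import Mathlib

open SimpleGraph

/-- A set of vertices is independent if no two of its members are adjacent. -/
def SimpleGraph.IsIndep {V : Type} (G : SimpleGraph V) (s : Set V) : Prop :=
  s.Pairwise fun u v => ¬ G.Adj u v

/-- The independence number of the subgraph of `G` induced by `W`:
the largest size of a finite independent set contained in `W`. -/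
noncomputable def alphaOn {V : Type} (G : SimpleGraph V) (W : Set V) : ℕ :=
  sSup {n | ∃ S : Finset V, ↑S ⊆ W ∧ G.IsIndep ↑S ∧ S.card = n}

/-- A tree decomposition of `G` with decomposition tree `tree`. -/
structure TreeDecomp {V T : Type} (G : SimpleGraph V) (tree : SimpleGraph T) : Type where
  bag : T → Set V
  isTree : tree.IsTree
  mem_bag : ∀ v : V, ∃ t, v ∈ bag t
  edge_bag : ∀ ⦃u v : V⦄, G.Adj u v → ∃ t, u ∈ bag t ∧ v ∈ bag t
  conn : ∀ v : V, (tree.induce {t | v ∈ bag t}).Connected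

/-- `tree-α(G) ≤ k`: some tree decomposition of `G` has all bags of independence number `≤ k`. -/
def TreeAlphaLE {V : Type} (G : SimpleGraph V) (k : ℕ) : Prop :=
  ∃ (T : Type) (tree : SimpleGraph T) (td : TreeDecomp G tree),
    ∀ t : T, alphaOn G (td.bag t) ≤ k

/-!
Induct on `|W|`. If some node `t` has vertices of `W \ X_t` in two components of `T - t`, these
split `W \ X_t` into two nonempty parts `A`, `B` with no edges between them, so
`α(A) + α(B) ≤ α(W)`, and covers of `A` and `B` together with `X_t` use at most
`(2α(A) - 1) + (2α(B) - 1) + 1 ≤ 2α(W) - 1` bags. Otherwise every node `t` whose bag misses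
part of `W` points to the neighbour towards the single component of `T - t` meeting `W \ X_t`.
On a finite subtree spanning the bags of `W` some edge `t t'` has both ends pointing at each
other; then `W ⊆ X_t ∪ X_t'`, and a vertex of `W \ X_t` and one of `W \ X_t'` are distinct and
non-adjacent, so two bags suffice and `α(W) ≥ 2`.
-/

namespace SimpleGraph

variable {V : Type*} {G : SimpleGraph V}

def ReachableAvoiding (G : SimpleGraph V) (t a b : V) : Prop :=
  ∃ p : G.Walk a b, t ∉ p.support

namespace ReachableAvoiding

variable {t a b c : V}

lemma ne_left (h : G.ReachableAvoiding t a b) : a ≠ t := by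
  rintro rfl
  obtain ⟨p, hp⟩ := h
  exact hp p.start_mem_support

lemma refl (ha : a ≠ t) : G.ReachableAvoiding t a a :=
  ⟨.nil, by simpa using ha.symm⟩

lemma symm (h : G.ReachableAvoiding t a b) : G.ReachableAvoiding t b a := by
  obtain ⟨p, hp⟩ := h
  exact ⟨p.reverse, by simpa using hp⟩

lemma trans (h : G.ReachableAvoiding t a b) (h' : G.ReachableAvoiding t b c) :
    G.ReachableAvoiding t a c := by
  obtain ⟨p, hp⟩ := h
  obtain ⟨q, hq⟩ := h'
  exact ⟨p.append q, by simp [Walk.mem_support_append_iff, hp, hq]⟩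

end ReachableAvoiding

lemma Adj.reachableAvoiding {t a b : V} (h : G.Adj a b) (ha : a ≠ t) (hb : b ≠ t) :
    G.ReachableAvoiding t a b :=
  ⟨h.toWalk, by simp [ha.symm, hb.symm]⟩

lemma Walk.exists_adj_reachableAvoiding [DecidableEq V] {t b : V} (p : G.Walk t b) (h : t ≠ b) :
    ∃ t' ∈ p.support, G.Adj t t' ∧ G.ReachableAvoiding t t' b := by
  have hq := p.bypass_isPath
  have hsub := p.support_bypass_subset_support
  generalize p.bypass = q at hq hsub
  cases q with
  | nil => exact absurd rfl h
  | cons hadj q =>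
    rw [Walk.cons_isPath_iff] at hq
    exact ⟨_, hsub (by simp), hadj, q, hq.2⟩

/-- The edge `t t'` is a bridge. -/
lemma IsAcyclic.not_reachableAvoiding (hG : G.IsAcyclic) {t t' s : V} (hadj : G.Adj t t')
    (h : G.ReachableAvoiding t' s t) : ¬ G.ReachableAvoiding t s t' := by
  rintro ⟨q, hq⟩
  obtain ⟨p, hp⟩ := h
  have hbridge := isBridge_iff.mp (isAcyclic_iff_forall_adj_isBridge.mp hG hadj)
  have he : s(t, t') ∉ (p.reverse.append q).edges := by
    simp only [Walk.edges_append, Walk.edges_reverse, List.mem_append, List.mem_reverse]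
    rintro (he | he)
    exacts [hp (p.snd_mem_support_of_mem_edges he), hq (q.fst_mem_support_of_mem_edges he)]
  exact hbridge ((p.reverse.append q).toDeleteEdge _ he).reachable

lemma IsAcyclic.exists_mem_apply_apply_eq (hG : G.IsAcyclic) {F : Set V} (hF : F.Finite)
    (hne : F.Nonempty) {p : V → V} (hpF : ∀ t ∈ F, p t ∈ F) (hadj : ∀ t ∈ F, G.Adj t (p t)) :
    ∃ t ∈ F, p (p t) = t := by
  classical
  -- If `p (p t) ≠ t`, the branch of `G - p t` containing `p (p t)` lies strictly inside the
  -- branch of `G - t` containing `p t`, so a minimal branch gives a fixed point of `p ∘ p`.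
  obtain ⟨t, htF, hmin⟩ :=
    hF.exists_minimalFor (fun t => {s | G.ReachableAvoiding t s (p t)}) F hne
  refine ⟨t, htF, by_contra fun hpp => ?_⟩
  have htpt := hadj t htF
  have hstep : G.ReachableAvoiding t (p (p t)) (p t) :=
    (hadj _ (hpF t htF)).symm.reachableAvoiding hpp htpt.ne.symm
  have hsub : {s | G.ReachableAvoiding (p t) s (p (p t))} ⊆
      {s | G.ReachableAvoiding t s (p t)} := by
    rintro s ⟨q, hq⟩
    by_cases hts : t ∈ q.support
    · have hback : G.ReachableAvoiding (p t) (p (p t)) t := ReachableAvoiding.symm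
        ⟨q.dropUntil t hts, fun h => hq (q.support_dropUntil_subset_support hts h)⟩
      exact absurd hstep (hG.not_reachableAvoiding htpt hback)
    · exact ReachableAvoiding.trans ⟨q, hts⟩ hstep
  exact (hmin (hpF t htF) hsub (.refl htpt.ne.symm)).ne_left rfl

lemma Preconnected.exists_finite_superset_forall_exists_adj (hG : G.Preconnected) {N : Set V}
    (hN : N.Finite) :
    ∃ F : Set V, F.Finite ∧ N ⊆ F ∧ ∀ t ∈ F, ∀ b ∈ N, t ≠ b →
      ∃ t' ∈ F, G.Adj t t' ∧ G.ReachableAvoiding t t' b := by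
  classical
  obtain rfl | ⟨t₀, -⟩ := N.eq_empty_or_nonempty
  · exact ⟨∅, by simp⟩
  let walk (b : V) : G.Walk t₀ b := (hG t₀ b).some
  refine ⟨⋃ b ∈ N, {x | x ∈ (walk b).support}, hN.biUnion fun b _ => (walk b).support.finite_toSet,
    fun b hb => Set.mem_biUnion hb (walk b).end_mem_support, fun t ht b hb htb => ?_⟩
  obtain ⟨b', hb', ht⟩ := Set.mem_iUnion₂.mp ht
  let r := ((walk b').takeUntil t ht).reverse.append (walk b)
  obtain ⟨t', ht', hadj, hreach⟩ := r.exists_adj_reachableAvoiding htb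
  refine ⟨t', ?_, hadj, hreach⟩
  rcases (Walk.mem_support_append_iff _ _).mp ht' with h | h
  · rw [Walk.support_reverse, List.mem_reverse] at h
    exact Set.mem_biUnion hb' ((walk b').support_takeUntil_subset_support ht h)
  · exact Set.mem_biUnion hb h

end SimpleGraph

section IndependenceNumber

variable {V : Type} [Finite V] (G : SimpleGraph V)

lemma alphaOn_bddAbove (W : Set V) :
    BddAbove {n | ∃ S : Finset V, ↑S ⊆ W ∧ G.IsIndep ↑S ∧ S.card = n} := by
  have := Fintype.ofFinite V
  exact ⟨Fintype.card V, fun n ⟨S, _, _, hS⟩ => hS ▸ S.card_le_univ⟩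

lemma card_le_alphaOn {W : Set V} {S : Finset V} (hSW : ↑S ⊆ W) (hS : G.IsIndep ↑S) :
    S.card ≤ alphaOn G W :=
  le_csSup (alphaOn_bddAbove G W) ⟨S, hSW, hS, rfl⟩

lemma exists_isIndep_card_eq_alphaOn (W : Set V) :
    ∃ S : Finset V, ↑S ⊆ W ∧ G.IsIndep ↑S ∧ S.card = alphaOn G W :=
  Nat.sSup_mem (s := {n | ∃ S : Finset V, (S : Set V) ⊆ W ∧ G.IsIndep S ∧ S.card = n})
    ⟨0, ∅, by simp [SimpleGraph.IsIndep]⟩ (alphaOn_bddAbove G W)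

lemma one_le_alphaOn {W : Set V} (hW : W.Nonempty) : 1 ≤ alphaOn G W := by
  obtain ⟨w, hw⟩ := hW
  simpa using card_le_alphaOn G (S := {w}) (by simpa using hw) (by simp [SimpleGraph.IsIndep])

lemma alphaOn_add_alphaOn_le {A B W : Set V} (hAW : A ⊆ W) (hBW : B ⊆ W) (hAB : Disjoint A B)
    (hadj : ∀ a ∈ A, ∀ b ∈ B, ¬ G.Adj a b) : alphaOn G A + alphaOn G B ≤ alphaOn G W := by
  classical
  obtain ⟨SA, hSA, hSA_indep, hSA_card⟩ := exists_isIndep_card_eq_alphaOn G A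
  obtain ⟨SB, hSB, hSB_indep, hSB_card⟩ := exists_isIndep_card_eq_alphaOn G B
  have hindep : G.IsIndep ↑(SA ∪ SB) := by
    rw [Finset.coe_union, SimpleGraph.IsIndep, Set.pairwise_union]
    exact ⟨hSA_indep, hSB_indep, fun a ha b hb _ =>
      ⟨hadj a (hSA ha) b (hSB hb), fun h => hadj a (hSA ha) b (hSB hb) h.symm⟩⟩
  have hdisj : Disjoint SA SB := by
    rw [← Finset.disjoint_coe]
    exact hAB.mono hSA hSB
  rw [← hSA_card, ← hSB_card, ← Finset.card_union_of_disjoint hdisj]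
  exact card_le_alphaOn G (by simpa using And.intro (hSA.trans hAW) (hSB.trans hBW)) hindep

end IndependenceNumber

namespace TreeDecomp

variable {V T : Type} {G : SimpleGraph V} {tree : SimpleGraph T} (td : TreeDecomp G tree)

noncomputable def node (v : V) : T := (td.mem_bag v).choose

lemma mem_bag_node (v : V) : v ∈ td.bag (td.node v) := (td.mem_bag v).choose_spec

lemma reachableAvoiding_of_mem_bag {v : V} {a b t : T} (ha : v ∈ td.bag a) (hb : v ∈ td.bag b)
    (ht : v ∉ td.bag t) : tree.ReachableAvoiding t a b := by
  obtain ⟨p⟩ := (td.conn v).preconnected ⟨a, ha⟩ ⟨b, hb⟩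
  let f := (Embedding.induce (G := tree) {s | v ∈ td.bag s}).toHom
  refine ⟨p.map f, fun hmem => ?_⟩
  replace hmem : t ∈ (p.map f).support := hmem
  rw [Walk.support_map, List.mem_map] at hmem
  obtain ⟨s, -, rfl⟩ := hmem
  exact ht s.2

lemma reachableAvoiding_of_adj {u v : V} {t : T} (huv : G.Adj u v) (hu : u ∉ td.bag t)
    (hv : v ∉ td.bag t) : tree.ReachableAvoiding t (td.node u) (td.node v) := by
  obtain ⟨s, hus, hvs⟩ := td.edge_bag huv
  exact (td.reachableAvoiding_of_mem_bag (td.mem_bag_node u) hus hu).trans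
    (td.reachableAvoiding_of_mem_bag hvs (td.mem_bag_node v) hv)

def CoverableBy (W : Set V) (k : ℕ) : Prop :=
  ∃ B : Finset T, B.card ≤ k ∧ ∀ v ∈ W, ∃ t ∈ B, v ∈ td.bag t

lemma coverableBy_bag (t : T) : td.CoverableBy (td.bag t) 1 :=
  ⟨{t}, by simp, fun _ hv => ⟨t, Finset.mem_singleton_self t, hv⟩⟩

variable {td}

lemma CoverableBy.mono {W W' : Set V} {k k' : ℕ} (h : td.CoverableBy W k) (hW : W' ⊆ W)
    (hk : k ≤ k') : td.CoverableBy W' k' := by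
  obtain ⟨B, hB, hcov⟩ := h
  exact ⟨B, hB.trans hk, fun v hv => hcov v (hW hv)⟩

lemma CoverableBy.union {W W' : Set V} {k k' : ℕ} (h : td.CoverableBy W k)
    (h' : td.CoverableBy W' k') : td.CoverableBy (W ∪ W') (k + k') := by
  classical
  obtain ⟨B, hB, hcov⟩ := h
  obtain ⟨B', hB', hcov'⟩ := h'
  refine ⟨B ∪ B', (Finset.card_union_le B B').trans (add_le_add hB hB'), ?_⟩
  rintro v (hv | hv)
  · obtain ⟨t, ht, hvt⟩ := hcov v hv
    exact ⟨t, Finset.mem_union_left B' ht, hvt⟩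
  · obtain ⟨t, ht, hvt⟩ := hcov' v hv
    exact ⟨t, Finset.mem_union_right B ht, hvt⟩

variable [Finite V]

lemma coverableBy_of_not_reachableAvoiding {W : Set V} {t : T} {w₁ w₂ : V} (hw₁ : w₁ ∈ W)
    (hw₂ : w₂ ∈ W) (hw₁t : w₁ ∉ td.bag t) (hw₂t : w₂ ∉ td.bag t)
    (hsep : ¬ tree.ReachableAvoiding t (td.node w₁) (td.node w₂))
    (ih : ∀ U ⊂ W, U.Nonempty → td.CoverableBy U (2 * alphaOn G U - 1)) :
    td.CoverableBy W (2 * alphaOn G W - 1) := by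
  set A := {w ∈ W | w ∉ td.bag t ∧ tree.ReachableAvoiding t (td.node w) (td.node w₁)}
  set B := {w ∈ W | w ∉ td.bag t ∧ ¬ tree.ReachableAvoiding t (td.node w) (td.node w₁)}
  have hw₁A : w₁ ∈ A := ⟨hw₁, hw₁t, .refl fun h => hw₁t (h ▸ td.mem_bag_node w₁)⟩
  have hw₂B : w₂ ∈ B := ⟨hw₂, hw₂t, fun h => hsep h.symm⟩
  have hAW : A ⊂ W := ⟨fun w hw => hw.1, fun h => hw₂B.2.2 (h hw₂).2.2⟩
  have hBW : B ⊂ W := ⟨fun w hw => hw.1, fun h => (h hw₁).2.2 hw₁A.2.2⟩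
  have hAB : Disjoint A B := Set.disjoint_left.mpr fun w hA hB => hB.2.2 hA.2.2
  have hadj : ∀ a ∈ A, ∀ b ∈ B, ¬ G.Adj a b := fun a ⟨_, hat, ha⟩ b ⟨_, hbt, hb⟩ hab =>
    hb ((td.reachableAvoiding_of_adj hab hat hbt).symm.trans ha)
  have hα := alphaOn_add_alphaOn_le G hAW.subset hBW.subset hAB hadj
  have hαA := one_le_alphaOn G ⟨w₁, hw₁A⟩
  have hαB := one_le_alphaOn G ⟨w₂, hw₂B⟩
  have hcov : W ⊆ td.bag t ∪ (A ∪ B) := by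
    intro w hw
    by_cases hwt : w ∈ td.bag t
    · exact .inl hwt
    by_cases hwr : tree.ReachableAvoiding t (td.node w) (td.node w₁)
    exacts [.inr (.inl ⟨hw, hwt, hwr⟩), .inr (.inr ⟨hw, hwt, hwr⟩)]
  exact ((td.coverableBy_bag t).union ((ih A hAW ⟨w₁, hw₁A⟩).union (ih B hBW ⟨w₂, hw₂B⟩))).mono
    hcov (by omega)

lemma coverableBy_of_adj {W : Set V} {t t' : T} {w w' : V} (htt' : tree.Adj t t')
    (hside : ∀ u ∈ W, u ∉ td.bag t → ∀ s, u ∈ td.bag s → tree.ReachableAvoiding t s t')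
    (hside' : ∀ u ∈ W, u ∉ td.bag t' → ∀ s, u ∈ td.bag s → tree.ReachableAvoiding t' s t)
    (hw : w ∈ W) (hwt : w ∉ td.bag t) (hw' : w' ∈ W) (hw't' : w' ∉ td.bag t') :
    td.CoverableBy W (2 * alphaOn G W - 1) := by
  have hbridge {s : T} (h : tree.ReachableAvoiding t s t') (h' : tree.ReachableAvoiding t' s t) :
      False :=
    td.isTree.isAcyclic.not_reachableAvoiding htt' h' h
  have hcov : W ⊆ td.bag t ∪ td.bag t' := by
    intro u hu
    by_contra hut
    rw [Set.mem_union, not_or] at hut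
    exact hbridge (hside u hu hut.1 _ (td.mem_bag_node u))
      (hside' u hu hut.2 _ (td.mem_bag_node u))
  have hadj : ¬ G.Adj w w' := by
    intro hadj
    obtain ⟨s, hws, hw's⟩ := td.edge_bag hadj
    exact hbridge (hside w hw hwt s hws) (hside' w' hw' hw't' s hw's)
  have hne : w ≠ w' := by
    rintro rfl
    exact hw't' ((hcov hw).resolve_left hwt)
  have hα := alphaOn_add_alphaOn_le G (A := {w}) (B := {w'}) (by simpa using hw)
    (by simpa using hw') (by simpa using hne) (by simpa using hadj)
  have h₁ := one_le_alphaOn G (Set.singleton_nonempty w)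
  have h₂ := one_le_alphaOn G (Set.singleton_nonempty w')
  exact ((td.coverableBy_bag t).union (td.coverableBy_bag t')).mono hcov (by omega)

lemma coverableBy_of_forall_reachableAvoiding {W : Set V} (hW : W.Nonempty)
    (hbag : ∀ t, ∃ w ∈ W, w ∉ td.bag t)
    (hconn : ∀ t, ∀ u ∈ W, ∀ v ∈ W, u ∉ td.bag t → v ∉ td.bag t →
      tree.ReachableAvoiding t (td.node u) (td.node v)) :
    td.CoverableBy W (2 * alphaOn G W - 1) := by
  obtain ⟨F, hF, hWF, hstep⟩ := td.isTree.connected.preconnected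
    |>.exists_finite_superset_forall_exists_adj (W.toFinite.image td.node)
  have hpoint : ∀ t, ∃ t', t ∈ F → t' ∈ F ∧ tree.Adj t t' ∧
      ∃ w ∈ W, w ∉ td.bag t ∧ tree.ReachableAvoiding t t' (td.node w) := by
    intro t
    by_cases ht : t ∈ F
    · obtain ⟨w, hw, hwt⟩ := hbag t
      obtain ⟨t', ht'F, hadj, hreach⟩ := hstep t ht _ (Set.mem_image_of_mem _ hw)
        fun h => hwt (h ▸ td.mem_bag_node w)
      exact ⟨t', fun _ => ⟨ht'F, hadj, w, hw, hwt, hreach⟩⟩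
    · exact ⟨t, fun h => absurd h ht⟩
  choose p hp using hpoint
  obtain ⟨t, htF, hpp⟩ := td.isTree.isAcyclic.exists_mem_apply_apply_eq hF
    ((hW.image _).mono hWF) (fun t ht => (hp t ht).1) (fun t ht => (hp t ht).2.1)
  have hside : ∀ t ∈ F, ∀ u ∈ W, u ∉ td.bag t → ∀ s, u ∈ td.bag s →
      tree.ReachableAvoiding t s (p t) := by
    intro t ht u hu hut s hs
    obtain ⟨-, -, w, hw, hwt, hreach⟩ := hp t ht
    exact (td.reachableAvoiding_of_mem_bag hs (td.mem_bag_node u) hut).trans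
      ((hconn t u hu w hw hut hwt).trans hreach.symm)
  obtain ⟨hptF, hadj, w, hw, hwt, -⟩ := hp t htF
  obtain ⟨-, -, w', hw', hw't, -⟩ := hp (p t) hptF
  have hside' := hside (p t) hptF
  rw [hpp] at hside'
  exact coverableBy_of_adj hadj (hside t htF) hside' hw hwt hw' hw't

end TreeDecomp

/-- a nonempty set `W` of vertices can be covered by at most `2·α(W) − 1` bags
of any tree decomposition. -/
theorem stmt5 {V T : Type} [Finite V] (G : SimpleGraph V)
    (tree : SimpleGraph T) (td : TreeDecomp G tree)
    (W : Set V) (hW : W.Nonempty) :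
    ∃ B : Finset T, B.card ≤ 2 * alphaOn G W - 1 ∧
      ∀ v ∈ W, ∃ t ∈ B, v ∈ td.bag t := by
  induction hn : W.ncard using Nat.strong_induction_on generalizing W with
  | _ n ih => ?_
  have ih' : ∀ U ⊂ W, U.Nonempty → td.CoverableBy U (2 * alphaOn G U - 1) :=
    fun U hUW hU => ih _ (hn ▸ Set.ncard_lt_ncard hUW W.toFinite) U hU rfl
  by_cases hbag : ∃ t, W ⊆ td.bag t
  · obtain ⟨t, ht⟩ := hbag
    have := one_le_alphaOn G hW
    exact (td.coverableBy_bag t).mono ht (by omega)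
  by_cases hsep : ∃ t, ∃ u ∈ W, ∃ v ∈ W, u ∉ td.bag t ∧ v ∉ td.bag t ∧
      ¬ tree.ReachableAvoiding t (td.node u) (td.node v)
  · obtain ⟨t, u, hu, v, hv, hut, hvt, huv⟩ := hsep
    exact td.coverableBy_of_not_reachableAvoiding hu hv hut hvt huv ih'
  push Not at hbag hsep
  exact td.coverableBy_of_forall_reachableAvoiding hW (fun t => Set.not_subset.mp (hbag t)) hsep
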